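/- If a measurable equivalence relation R on (X, μ) with countable classes is an increasing union of subrelations R_n, each of which has all classes finite, then R has cost at most 1. -/

import Mathlib

/-!
Let `S 0` be equality and `S (n + 1) = Rn n`, and fix a Borel injection `F : X → ℝ`. On every
`R`-class define a linear order recursively: inside an `S (n + 1)`-class, the `S n`-subclasses are
ordered by their least `F`-value. Every `S n`-class is then a finite interval, so the graph joining
each point to its immediate successor and predecessor connects every `R`-class, and every vertex
has degree at most two; hence its cost is at most `μ univ = 1`.

The delicate point is that this successor graph is Borel: "no point lies strictly between"
quantifies over a finite class, and projections of Borel sets with finite sections are Borel.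
This finite-to-one Lusin–Souslin theorem follows from Novikov's separation theorem for countably
many analytic sets, which is proved by the cylinder-refinement argument behind Lusin's separation
theorem, refining the coordinates along the schedule `Nat.unpair`.
-/

open MeasureTheory
open scoped ENNReal

/-- A graphing of a countable equivalence relation `R` on `(X, μ)`: a measurable symmetric
set of edges `E ⊆ R` whose connected components coincide with the `R`-classes. -/
structure Graphing (X : Type*) [MeasurableSpace X] (μ : Measure X) (R : X → X → Prop) where
  E : X → X → Prop
  symm : ∀ x y, E x y → E y x
  sub : ∀ ⦃x y⦄, E x y → R x y
  spans : ∀ ⦃x y⦄, R x y → Relation.ReflTransGen E x y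
  meas : MeasurableSet {q : X × X | E q.1 q.2}

/-- The cost of a graphing: half the integral of the degree. -/
noncomputable def Graphing.cost {X : Type*} [MeasurableSpace X] {μ : Measure X}
    {R : X → X → Prop} (g : Graphing X μ R) : ℝ≥0∞ :=
  (1 / 2) * ∫⁻ x, ({y | g.E x y}.encard : ℝ≥0∞) ∂μ

/-- The cost of a relation: the infimum of the costs of its graphings. -/
noncomputable def relCost (X : Type*) [MeasurableSpace X] (μ : Measure X)
    (R : X → X → Prop) : ℝ≥0∞ :=
  ⨅ g : Graphing X μ R, g.cost

open Set Function PiNat Filter Topology TopologicalSpace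

namespace PiNat

variable {E : ℕ → Type*}

theorem exists_forall_mem_cylinder {x : ℕ → ∀ n, E n} {n : ℕ → ℕ}
    (hanti : Antitone fun t => cylinder (x t) (n t)) (hn : Tendsto n atTop atTop) :
    ∃ y, ∀ t, y ∈ cylinder (x t) (n t) := by
  choose T hT using fun k => (hn.eventually_gt_atTop k).exists
  refine ⟨fun k => x (T k) k, fun t => mem_cylinder_iff.2 fun k hk => ?_⟩
  have hx := self_mem_cylinder (x (max t (T k))) (n (max t (T k)))
  exact (mem_cylinder_iff.1 (hanti (le_max_right t (T k)) hx) k (hT k)).symm.trans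
    (mem_cylinder_iff.1 (hanti (le_max_left t (T k)) hx) k hk)

theorem exists_forall_mem_cylinder_of_refine {q : ℕ → ℕ → (∀ n, E n) × ℕ}
    (hq : ∀ t, ∃ y ∈ cylinder (q t (Nat.unpair t).1).1 (q t (Nat.unpair t).1).2,
      q (t + 1) = update (q t) (Nat.unpair t).1 (y, (q t (Nat.unpair t).1).2 + 1)) (j : ℕ) :
    Tendsto (fun t => (q t j).2) atTop atTop ∧ ∃ z, ∀ t, z ∈ cylinder (q t j).1 (q t j).2 := by
  have hstep : ∀ t, cylinder (q (t + 1) j).1 (q (t + 1) j).2 ⊆ cylinder (q t j).1 (q t j).2 ∧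
      (q t j).2 ≤ (q (t + 1) j).2 ∧ ((Nat.unpair t).1 = j → (q (t + 1) j).2 = (q t j).2 + 1) := by
    intro t
    obtain ⟨y, hy, hqt⟩ := hq t
    rw [hqt]
    rcases eq_or_ne j (Nat.unpair t).1 with rfl | hj
    · rw [update_self]
      refine ⟨?_, Nat.le_succ _, fun _ => rfl⟩
      rw [← mem_cylinder_iff_eq.1 hy]
      exact cylinder_anti y (Nat.le_succ _)
    · simp [update_of_ne hj, Ne.symm hj]
  have hmono : Monotone fun t => (q t j).2 := monotone_nat_of_le_succ fun t => (hstep t).2.1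
  have htend : Tendsto (fun t => (q t j).2) atTop atTop := by
    refine tendsto_atTop_atTop_of_monotone hmono fun N => ?_
    induction N with
    | zero => exact ⟨0, Nat.zero_le _⟩
    | succ N ih =>
      obtain ⟨t, ht⟩ := ih
      refine ⟨Nat.pair j t + 1, ?_⟩
      rw [(hstep _).2.2 (by simp)]
      exact Nat.succ_le_succ (ht.trans (hmono (Nat.right_le_pair j t)))
  exact ⟨htend, exists_forall_mem_cylinder (antitone_nat_of_succ_le fun t => (hstep t).1) htend⟩

theorem exists_image_cylinder_subset [∀ n, TopologicalSpace (E n)] [∀ n, DiscreteTopology (E n)]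
    {β : Type*} [TopologicalSpace β] {g : (∀ n, E n) → β} {y : ∀ n, E n} (hg : ContinuousAt g y)
    {U : Set β} (hU : U ∈ 𝓝 (g y)) :
    ∃ N, ∀ x n, N ≤ n → y ∈ cylinder x n → g '' cylinder x n ⊆ U := by
  obtain ⟨_, ⟨z, N, rfl⟩, hyz, hzU⟩ :=
    (isTopologicalBasis_cylinders E).mem_nhds_iff.1 (hg.preimage_mem_nhds hU)
  refine ⟨N, fun x n hNn hyx => image_subset_iff.2 ?_⟩
  rw [← mem_cylinder_iff_eq.1 hyx]
  exact (cylinder_anti y hNn).trans ((mem_cylinder_iff_eq.1 hyz).symm ▸ hzU)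

variable {α : Type*}

def cylinderImages (f : ℕ → (ℕ → ℕ) → α) (p : ℕ → (ℕ → ℕ) × ℕ) (j : ℕ) : Set α :=
  f j '' cylinder (p j).1 (p j).2

theorem cylinderImages_update (f : ℕ → (ℕ → ℕ) → α) (p : ℕ → (ℕ → ℕ) × ℕ) (j : ℕ)
    (q : (ℕ → ℕ) × ℕ) :
    cylinderImages f (update p j q) = update (cylinderImages f p) j (f j '' cylinder q.1 q.2) := by
  funext i
  rcases eq_or_ne i j with rfl | hij <;> simp [cylinderImages, *]

end PiNat

namespace MeasureTheory

variable {α : Type*} [MeasurableSpace α]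

def MeasurablySeparableFamily (s : ℕ → Set α) : Prop :=
  ∃ t : ℕ → Set α, (∀ i, s i ⊆ t i) ∧ ⋂ i, t i = ∅ ∧ ∀ i, MeasurableSet (t i)

theorem MeasurablySeparableFamily.of_update_iUnion {s : ℕ → Set α} {j : ℕ}
    {t : ℕ → Set α} (hs : s j ⊆ ⋃ k, t k)
    (h : ∀ k, MeasurablySeparableFamily (update s j (t k))) : MeasurablySeparableFamily s := by
  choose B hsB hB hBm using h
  refine ⟨update (fun i => ⋂ k, B k i) j (⋃ k, B k j), fun i => ?_, ?_, fun i => ?_⟩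
  · rcases eq_or_ne i j with rfl | hij
    · rw [update_self]
      exact hs.trans (iUnion_mono fun k => by simpa using hsB k i)
    · rw [update_of_ne hij]
      exact subset_iInter fun k => by simpa [hij] using hsB k i
  · refine eq_empty_of_forall_notMem fun x hx => ?_
    obtain ⟨k, hk⟩ := mem_iUnion.1 (by simpa using mem_iInter.1 hx j)
    have hxk : x ∈ ⋂ i, B k i := mem_iInter.2 fun i => by
      rcases eq_or_ne i j with rfl | hij
      · exact hk
      · exact mem_iInter.1 (by simpa [hij] using mem_iInter.1 hx i) k
    simp [hB k] at hxk
  · rcases eq_or_ne i j with rfl | hij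
    · simpa using MeasurableSet.iUnion fun k => hBm k i
    · simpa [hij] using MeasurableSet.iInter fun k => hBm k i

theorem measurablySeparableFamily_of_disjoint {s : ℕ → Set α} {a b : ℕ}
    {u v : Set α} (hab : a ≠ b) (hu : s a ⊆ u) (hv : s b ⊆ v) (huv : Disjoint u v)
    (hum : MeasurableSet u) (hvm : MeasurableSet v) : MeasurablySeparableFamily s := by
  refine ⟨update (update (fun _ => univ) a u) b v, fun i => ?_, ?_, fun i => ?_⟩
  · rcases eq_or_ne i b with rfl | hib
    · simpa using hv
    rcases eq_or_ne i a with rfl | hia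
    · simpa [hib] using hu
    · simp [hia, hib]
  · refine eq_empty_of_forall_notMem fun x hx => ?_
    have hxu : x ∈ u := by simpa [hab] using mem_iInter.1 hx a
    have hxv : x ∈ v := by simpa using mem_iInter.1 hx b
    exact huv.notMem_of_mem_left hxu hxv
  · rcases eq_or_ne i b with rfl | hib
    · simpa using hvm
    rcases eq_or_ne i a with rfl | hia
    · simpa [hib] using hum
    · simp [hia, hib]

theorem exists_refine_of_not_measurablySeparableFamily
    {f : ℕ → (ℕ → ℕ) → α} {p : ℕ → (ℕ → ℕ) × ℕ}
    (h : ¬ MeasurablySeparableFamily (cylinderImages f p)) (j : ℕ) :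
    ∃ y ∈ PiNat.cylinder (p j).1 (p j).2,
      ¬ MeasurablySeparableFamily (cylinderImages f (update p j (y, (p j).2 + 1))) := by
  by_contra! H
  refine h (.of_update_iUnion (j := j)
    (t := fun k => f j '' PiNat.cylinder (update (p j).1 (p j).2 k) ((p j).2 + 1)) ?_ fun k => ?_)
  · rw [← image_iUnion]
    exact image_mono (iUnion_cylinder_update (p j).1 (p j).2).superset
  · simpa [cylinderImages_update] using H _ (update_mem_cylinder _ _ k)

variable [TopologicalSpace α] [T2Space α] [OpensMeasurableSpace α]

theorem measurablySeparableFamily_range {f : ℕ → (ℕ → ℕ) → α} (hf : ∀ i, Continuous (f i))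
    (h : ⋂ i, range (f i) = ∅) : MeasurablySeparableFamily fun i => range (f i) := by
  by_contra hbad
  let A := {p : ℕ → (ℕ → ℕ) × ℕ // ¬ MeasurablySeparableFamily (cylinderImages f p)}
  choose y hy hyA using fun (p : A) j => exists_refine_of_not_measurablySeparableFamily p.2 j
  have hp₀ : cylinderImages f (fun _ => (0, 0)) = fun i => range (f i) := by
    funext i
    simp [cylinderImages, PiNat.cylinder_zero]
  let q : ℕ → A := fun t => Nat.rec (motive := fun _ => A) ⟨fun _ => (0, 0), hp₀ ▸ hbad⟩
    (fun t p => ⟨_, hyA p (Nat.unpair t).1⟩) t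
  choose hdepth z hz using exists_forall_mem_cylinder_of_refine (q := fun t => (q t).1)
    fun t => ⟨_, hy (q t) _, rfl⟩
  obtain ⟨a, b, hab⟩ : ∃ a b, f a (z a) ≠ f b (z b) := by
    by_contra! hall
    have : f 0 (z 0) ∈ ⋂ i, range (f i) := mem_iInter.2 fun i => hall i 0 ▸ mem_range_self _
    simp [h] at this
  obtain ⟨u, v, hu, hv, hau, hbv, huv⟩ := t2_separation hab
  obtain ⟨Na, hNa⟩ := exists_image_cylinder_subset (hf a).continuousAt (hu.mem_nhds hau)
  obtain ⟨Nb, hNb⟩ := exists_image_cylinder_subset (hf b).continuousAt (hv.mem_nhds hbv)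
  obtain ⟨t, hta, htb⟩ :=
    (((hdepth a).eventually_ge_atTop Na).and ((hdepth b).eventually_ge_atTop Nb)).exists
  exact (q t).2 (measurablySeparableFamily_of_disjoint (fun hab' => hab (by rw [hab']))
    (hNa _ _ hta (hz a t)) (hNb _ _ htb (hz b t)) huv hu.measurableSet hv.measurableSet)

/-- **Novikov's separation theorem**. -/
theorem AnalyticSet.measurablySeparableFamily {s : ℕ → Set α} (hs : ∀ i, AnalyticSet (s i))
    (h : ⋂ i, s i = ∅) : MeasurablySeparableFamily s := by
  by_cases hempty : ∃ i, s i = ∅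
  · obtain ⟨i, hi⟩ := hempty
    exact measurablySeparableFamily_of_disjoint (Nat.succ_ne_self i).symm hi.subset
      (subset_univ _) (empty_disjoint _) .empty .univ
  push Not at hempty
  have hrange : ∀ i, ∃ f : (ℕ → ℕ) → α, Continuous f ∧ range f = s i := fun i => by
    have := hs i
    rw [AnalyticSet] at this
    exact this.resolve_left (hempty i).ne_empty
  choose f hf hfs using hrange
  simpa [hfs] using measurablySeparableFamily_range hf (by simpa [hfs] using h)

end MeasureTheory

/-- The **Lusin–Souslin theorem** for finite-to-one maps. -/
theorem MeasurableSet.image_of_measurable_of_finite_fibers {γ β : Type*} [MeasurableSpace γ]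
    [StandardBorelSpace γ] [MeasurableSpace β] [MeasurableSpace.CountablySeparated β]
    {s : Set γ} {f : γ → β} (hs : MeasurableSet s) (hf : Measurable f)
    (hfin : ∀ b, (s ∩ f ⁻¹' {b}).Finite) : MeasurableSet (f '' s) := by
  let := upgradeStandardBorel γ
  obtain ⟨e, he, he_inj⟩ := MeasurableSpace.measurable_injection_nat_bool_of_countablySeparated β
  obtain ⟨u, hu⟩ := exists_seq_basis γ
  -- `z ∉ Prod.fst '' W i` says that `u i` contains `z` and no other point of `s` in its fibre.
  let W (i : ℕ) : Set (γ × γ) :=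
    {p | p.1 ∈ u i → p.2 ∈ s ∩ u i ∧ p.1 ≠ p.2 ∧ e (f p.1) = e (f p.2)}
  have hW (i : ℕ) : MeasurableSet (W i) := by
    have hui : MeasurableSet (u i) := (hu.isOpen (mem_range_self i)).measurableSet
    simp only [W, imp_iff_not_or]
    refine (measurable_fst hui).compl.union ((measurable_snd (hs.inter hui)).inter
      ((measurableSet_eq_fun measurable_fst measurable_snd).compl.inter ?_))
    exact measurableSet_eq_fun (he.comp (hf.comp measurable_fst)) (he.comp (hf.comp measurable_snd))
  obtain ⟨B, hWB, hB, hBm⟩ := AnalyticSet.measurablySeparableFamily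
    (fun i => (hW i).analyticSet_image measurable_fst) <| by
    refine eq_empty_of_forall_notMem fun z hz => ?_
    have hK : ((s ∩ f ⁻¹' {f z}) \ {z})ᶜ ∈ 𝓝 z :=
      ((hfin (f z)).sdiff.isClosed.isOpen_compl).mem_nhds fun hzK => hzK.2 rfl
    obtain ⟨_, ⟨i, rfl⟩, hzu, huK⟩ := hu.mem_nhds_iff.1 hK
    obtain ⟨⟨_, z'⟩, hzz', rfl⟩ := mem_iInter.1 hz i
    obtain ⟨⟨hz's, hz'u⟩, hne, hfe⟩ := hzz' hzu
    exact huK hz'u ⟨⟨hz's, (he_inj hfe).symm⟩, Ne.symm hne⟩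
  have hinj (i : ℕ) : InjOn f (s \ B i) := by
    have hmem : ∀ z ∈ s \ B i, z ∈ u i := fun z hz => by_contra fun hzu =>
      hz.2 (hWB i ⟨(z, z), fun h => absurd h hzu, rfl⟩)
    intro z hz z' hz' hfe
    by_contra hne
    exact hz.2 (hWB i ⟨(z, z'), fun _ => ⟨⟨hz'.1, hmem z' hz'⟩, hne, by rw [hfe]⟩, rfl⟩)
  have hcover : f '' s = ⋃ i, f '' (s \ B i) := by
    rw [← image_iUnion, ← sdiff_iInter, hB, sdiff_empty]
  rw [hcover]
  exact .iUnion fun i => (hs.diff (hBm i)).image_of_measurable_injOn hf (hinj i)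

theorem measurableSet_exists_of_finite {α β : Type*} [MeasurableSpace α] [StandardBorelSpace α]
    [MeasurableSpace β] [StandardBorelSpace β] {p : α → β → Prop}
    (hp : MeasurableSet {q : α × β | p q.1 q.2}) (hfin : ∀ a, {b | p a b}.Finite) :
    MeasurableSet {a | ∃ b, p a b} := by
  have := hp.image_of_measurable_of_finite_fibers measurable_fst fun a =>
    ((hfin a).image (Prod.mk a)).subset <| by
      rintro ⟨a', b⟩ ⟨hq, rfl : a' = a⟩
      exact ⟨b, hq, rfl⟩
  convert this using 1
  ext a
  simp

section LexOrder

variable {X : Type*}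

noncomputable def classMin (r : X → X → Prop) (F : X → ℝ) (x : X) : ℝ :=
  sInf (F '' {y | r x y})

section ClassMin

variable {r : X → X → Prop} {F : X → ℝ} {x y : X}

theorem classMin_eq (hr : Equivalence r) (h : r x y) : classMin r F x = classMin r F y := by
  have : {z | r x z} = {z | r y z} := ext fun z => ⟨hr.trans (hr.symm h), hr.trans h⟩
  rw [classMin, classMin, this]

theorem exists_rel_classMin_eq (hr : Equivalence r) (hfin : {y | r x y}.Finite) :
    ∃ y, r x y ∧ F y = classMin r F x :=
  ((Set.nonempty_of_mem (hr.refl x)).image F).csInf_mem (hfin.image F)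

theorem classMin_lt_iff (hr : Equivalence r) (hfin : {y | r x y}.Finite) {t : ℝ} :
    classMin r F x < t ↔ ∃ y, r x y ∧ F y < t := by
  rw [classMin, csInf_lt_iff (hfin.image F).bddBelow ⟨F x, x, hr.refl x, rfl⟩]
  simp

theorem rel_of_classMin_eq (hr : Equivalence r) (hfin : ∀ x, {y | r x y}.Finite)
    (hF : Injective F) (h : classMin r F x = classMin r F y) : r x y := by
  obtain ⟨a, hxa, ha⟩ := exists_rel_classMin_eq (F := F) hr (hfin x)
  obtain ⟨b, hyb, hb⟩ := exists_rel_classMin_eq (F := F) hr (hfin y)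
  obtain rfl : a = b := hF (by rw [ha, hb, h])
  exact hr.trans hxa (hr.symm hyb)

end ClassMin

structure IsFiniteFiltration (S : ℕ → X → X → Prop) : Prop where
  equivalence : ∀ n, Equivalence (S n)
  monotone : Monotone S
  finite : ∀ n x, {y | S n x y}.Finite
  eq_of_rel_zero : ∀ ⦃x y⦄, S 0 x y → x = y

/-- Inside an `S (n + 1)`-class, the `S n`-subclasses are ordered by their least `F`-value; the
witness `n` is necessarily the last level at which `x` and `y` are unrelated. -/
def LexLT (S : ℕ → X → X → Prop) (F : X → ℝ) (x y : X) : Prop :=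
  ∃ n, S (n + 1) x y ∧ classMin (S n) F x < classMin (S n) F y

def LexSucc (S : ℕ → X → X → Prop) (F : X → ℝ) (x y : X) : Prop :=
  LexLT S F x y ∧ ∀ z, ¬ (LexLT S F x z ∧ LexLT S F z y)

def LexLine (S : ℕ → X → X → Prop) (F : X → ℝ) (x y : X) : Prop :=
  LexSucc S F x y ∨ LexSucc S F y x

theorem lexLT_irrefl {S : ℕ → X → X → Prop} {F : X → ℝ} (x : X) : ¬ LexLT S F x x := by
  rintro ⟨_, _, h⟩
  exact h.false

theorem LexLT.exists_rel {S : ℕ → X → X → Prop} {F : X → ℝ} {x y : X} (h : LexLT S F x y) :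
    ∃ n, S n x y := by
  obtain ⟨n, h, -⟩ := h
  exact ⟨n + 1, h⟩

namespace IsFiniteFiltration

variable {S : ℕ → X → X → Prop} (hS : IsFiniteFiltration S) {F : X → ℝ} {x y z : X}
include hS

theorem rel_of_le {m n : ℕ} (hmn : m ≤ n) (h : S m x y) : S n x y :=
  hS.monotone hmn x y h

theorem equivalence_exists : Equivalence fun x y => ∃ n, S n x y where
  refl x := ⟨0, (hS.equivalence 0).refl x⟩
  symm := fun ⟨n, h⟩ => ⟨n, (hS.equivalence n).symm h⟩
  trans := fun ⟨m, h⟩ ⟨n, h'⟩ => ⟨max m n, (hS.equivalence _).trans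
    (hS.rel_of_le (le_max_left m n) h) (hS.rel_of_le (le_max_right m n) h')⟩

theorem classMin_le_of_le {n m : ℕ} (hxy : S (n + 1) x y)
    (hlt : classMin (S n) F x < classMin (S n) F y) (hnm : n ≤ m) :
    classMin (S m) F x ≤ classMin (S m) F y := by
  rcases hnm.eq_or_lt with rfl | hnm
  · exact hlt.le
  · exact (classMin_eq (hS.equivalence m) (hS.rel_of_le hnm hxy)).le

theorem lexLT_trans (hxy : LexLT S F x y) (hyz : LexLT S F y z) : LexLT S F x z := by
  obtain ⟨n, hxy, hlt⟩ := hxy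
  obtain ⟨m, hyz, hlt'⟩ := hyz
  rcases le_total n m with hnm | hmn
  · exact ⟨m, (hS.equivalence _).trans (hS.rel_of_le (by omega) hxy) hyz,
      (hS.classMin_le_of_le hxy hlt hnm).trans_lt hlt'⟩
  · exact ⟨n, (hS.equivalence _).trans hxy (hS.rel_of_le (by omega) hyz),
      hlt.trans_le (hS.classMin_le_of_le hyz hlt' hmn)⟩

theorem lexLT_or_lexLT (hF : Injective F) (hxy : ∃ k, S k x y) (hne : x ≠ y) :
    LexLT S F x y ∨ LexLT S F y x := by
  classical
  obtain ⟨n, hn⟩ : ∃ n, Nat.find hxy = n + 1 :=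
    Nat.exists_eq_succ_of_ne_zero fun h0 => hne (hS.eq_of_rel_zero (h0 ▸ Nat.find_spec hxy))
  have hS1 : S (n + 1) x y := hn ▸ Nat.find_spec hxy
  have hS0 : ¬ S n x y := Nat.find_min hxy (by omega)
  rcases lt_or_gt_of_ne (mt (rel_of_classMin_eq (hS.equivalence n) (hS.finite n) hF) hS0)
    with h | h
  · exact .inl ⟨n, hS1, h⟩
  · exact .inr ⟨n, (hS.equivalence _).symm hS1, h⟩

theorem rel_of_lexLT_of_lexLT {k : ℕ} (hk : S k x y) (hxz : LexLT S F x z)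
    (hzy : LexLT S F z y) : S k x z := by
  obtain ⟨n, hxz, hlt⟩ := hxz
  obtain ⟨m, hzy, hlt'⟩ := hzy
  by_contra hkxz
  have hkn : k ≤ n := by
    by_contra! h
    exact hkxz (hS.rel_of_le h hxz)
  have hxy : S n x y := hS.rel_of_le hkn hk
  rcases le_or_gt m n with hmn | hnm
  · exact (hlt.trans_le ((hS.classMin_le_of_le hzy hlt' hmn).trans
      (classMin_eq (hS.equivalence n) hxy).ge)).false
  · have hzy' : S (n + 1) z y :=
      (hS.equivalence _).trans ((hS.equivalence _).symm hxz) (hS.rel_of_le (by omega) hk)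
    exact hlt'.ne (classMin_eq (hS.equivalence m) (hS.rel_of_le hnm hzy'))

theorem reflTransGen_lexSucc {k : ℕ} (hk : S k x y) (hxy : LexLT S F x y) :
    Relation.ReflTransGen (LexSucc S F) x y := by
  induction hN : {z | LexLT S F x z ∧ LexLT S F z y}.ncard using Nat.strong_induction_on
    generalizing x y with
  | _ N ih =>
  by_cases hz : ∃ z, LexLT S F x z ∧ LexLT S F z y
  swap
  · exact .single ⟨hxy, fun z hz' => hz ⟨z, hz'⟩⟩
  obtain ⟨z, hxz, hzy⟩ := hz
  have hfin : {w | LexLT S F x w ∧ LexLT S F w y}.Finite :=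
    (hS.finite k x).subset fun w hw => hS.rel_of_lexLT_of_lexLT hk hw.1 hw.2
  have hxz' : S k x z := hS.rel_of_lexLT_of_lexLT hk hxz hzy
  have hzy' : S k z y := (hS.equivalence k).trans ((hS.equivalence k).symm hxz') hk
  have hsub₁ : {w | LexLT S F x w ∧ LexLT S F w z} ⊆ {w | LexLT S F x w ∧ LexLT S F w y} :=
    fun w hw => ⟨hw.1, hS.lexLT_trans hw.2 hzy⟩
  have hsub₂ : {w | LexLT S F z w ∧ LexLT S F w y} ⊆ {w | LexLT S F x w ∧ LexLT S F w y} :=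
    fun w hw => ⟨hS.lexLT_trans hxz hw.1, hw.2⟩
  have hlt₁ := ncard_lt_ncard ((ssubset_iff_of_subset hsub₁).2
    ⟨z, ⟨hxz, hzy⟩, fun h => lexLT_irrefl z h.2⟩) hfin
  have hlt₂ := ncard_lt_ncard ((ssubset_iff_of_subset hsub₂).2
    ⟨z, ⟨hxz, hzy⟩, fun h => lexLT_irrefl z h.1⟩) hfin
  rw [hN] at hlt₁ hlt₂
  exact (ih _ hlt₁ hxz' hxz rfl).trans (ih _ hlt₂ hzy' hzy rfl)

theorem reflTransGen_lexLine (hF : Injective F) (hxy : ∃ k, S k x y) :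
    Relation.ReflTransGen (LexLine S F) x y := by
  obtain ⟨k, hk⟩ := hxy
  rcases eq_or_ne x y with rfl | hne
  · exact .refl
  rcases hS.lexLT_or_lexLT hF ⟨k, hk⟩ hne with h | h
  · exact Relation.ReflTransGen.mono (fun _ _ => Or.inl) _ _ (hS.reflTransGen_lexSucc hk h)
  · exact Relation.ReflTransGen.mono (fun _ _ => Or.inr) _ _
      (Relation.ReflTransGen.swap _ _ (hS.reflTransGen_lexSucc ((hS.equivalence k).symm hk) h))

theorem exists_rel_of_lexLine (h : LexLine S F x y) : ∃ n, S n x y :=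
  h.elim (fun h => h.1.exists_rel) fun h => hS.equivalence_exists.symm h.1.exists_rel

theorem lexSucc_right_unique (hF : Injective F) (h : LexSucc S F x y) (h' : LexSucc S F x z) :
    y = z := by
  obtain ⟨hxy, hy⟩ := h
  obtain ⟨hxz, hz⟩ := h'
  by_contra hne
  rcases hS.lexLT_or_lexLT hF (hS.equivalence_exists.trans
    (hS.equivalence_exists.symm hxy.exists_rel) hxz.exists_rel) hne with hlt | hlt
  · exact hz y ⟨hxy, hlt⟩
  · exact hy z ⟨hxz, hlt⟩

theorem lexSucc_left_unique (hF : Injective F) (h : LexSucc S F y x) (h' : LexSucc S F z x) :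
    y = z := by
  obtain ⟨hyx, hy⟩ := h
  obtain ⟨hzx, hz⟩ := h'
  by_contra hne
  rcases hS.lexLT_or_lexLT hF (hS.equivalence_exists.trans hyx.exists_rel
    (hS.equivalence_exists.symm hzx.exists_rel)) hne with hlt | hlt
  · exact hy z ⟨hlt, hzx⟩
  · exact hz y ⟨hlt, hyx⟩

theorem encard_lexLine_le_two (hF : Injective F) (x : X) : {y | LexLine S F x y}.encard ≤ 2 :=
  calc {y | LexLine S F x y}.encard
      ≤ {y | LexSucc S F x y}.encard + {y | LexSucc S F y x}.encard := encard_union_le _ _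
    _ ≤ 1 + 1 := add_le_add (encard_le_one_iff.2 fun _ _ => hS.lexSucc_right_unique hF)
      (encard_le_one_iff.2 fun _ _ => hS.lexSucc_left_unique hF)
    _ = 2 := one_add_one_eq_two

end IsFiniteFiltration

end LexOrder

section Measurability

variable {X : Type*} [MeasurableSpace X] [StandardBorelSpace X] {F : X → ℝ}

theorem measurable_classMin {r : X → X → Prop} (hr : Equivalence r)
    (hfin : ∀ x, {y | r x y}.Finite) (hrm : MeasurableSet {q : X × X | r q.1 q.2})
    (hFm : Measurable F) : Measurable (classMin r F) := by
  refine measurable_of_Iio fun t => ?_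
  have : classMin r F ⁻¹' Iio t = {x | ∃ y, r x y ∧ F y < t} :=
    ext fun x => classMin_lt_iff hr (hfin x)
  rw [this]
  exact measurableSet_exists_of_finite
    (hrm.inter (measurableSet_lt (hFm.comp measurable_snd) measurable_const))
    fun x => (hfin x).subset fun _ hy => hy.1

namespace IsFiniteFiltration

variable {S : ℕ → X → X → Prop} (hS : IsFiniteFiltration S)
  (hSm : ∀ n, MeasurableSet {q : X × X | S n q.1 q.2}) (hFm : Measurable F)
include hS hSm hFm

theorem measurableSet_lexLT : MeasurableSet {q : X × X | LexLT S F q.1 q.2} := by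
  have : {q : X × X | LexLT S F q.1 q.2} = ⋃ n, {q : X × X | S (n + 1) q.1 q.2} ∩
      {q | classMin (S n) F q.1 < classMin (S n) F q.2} := by
    ext
    simp [LexLT]
  rw [this]
  refine .iUnion fun n => (hSm (n + 1)).inter (measurableSet_lt ?_ ?_) <;>
    exact (measurable_classMin (hS.equivalence n) (hS.finite n) (hSm n) hFm).comp (by fun_prop)

theorem measurableSet_lexSucc : MeasurableSet {q : X × X | LexSucc S F q.1 q.2} := by
  have hlt := hS.measurableSet_lexLT hSm hFm
  -- a point between `x` and `y` lies in their common `S k`-class, which is finite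
  have hbetween : {q : X × X | ∃ z, LexLT S F q.1 z ∧ LexLT S F z q.2} =
      ⋃ k, {q : X × X | ∃ z, S k q.1 q.2 ∧ S k q.1 z ∧ LexLT S F q.1 z ∧ LexLT S F z q.2} := by
    ext ⟨x, y⟩
    simp only [mem_ofPred_eq, mem_iUnion]
    constructor
    · rintro ⟨z, hxz, hzy⟩
      obtain ⟨k, hk⟩ := (hS.lexLT_trans hxz hzy).exists_rel
      exact ⟨k, z, hk, hS.rel_of_lexLT_of_lexLT hk hxz hzy, hxz, hzy⟩
    · rintro ⟨k, z, -, -, hxz, hzy⟩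
      exact ⟨z, hxz, hzy⟩
  have hmeas : MeasurableSet {q : X × X | ∃ z, LexLT S F q.1 z ∧ LexLT S F z q.2} := by
    rw [hbetween]
    refine .iUnion fun k => measurableSet_exists_of_finite ?_
      fun q => (hS.finite k q.1).subset fun _ hz => hz.2.1
    have hfst : Measurable fun p : (X × X) × X => (p.1.1, p.2) := by fun_prop
    have hsnd : Measurable fun p : (X × X) × X => (p.2, p.1.2) := by fun_prop
    exact (measurable_fst (hSm k)).inter ((hfst (hSm k)).inter ((hfst hlt).inter (hsnd hlt)))
  have : {q : X × X | LexSucc S F q.1 q.2} =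
      {q : X × X | LexLT S F q.1 q.2} ∩ {q : X × X | ∃ z, LexLT S F q.1 z ∧ LexLT S F z q.2}ᶜ := by
    ext
    simp [LexSucc]
  rw [this]
  exact hlt.inter hmeas.compl

theorem measurableSet_lexLine : MeasurableSet {q : X × X | LexLine S F q.1 q.2} :=
  (hS.measurableSet_lexSucc hSm hFm).union (measurable_swap (hS.measurableSet_lexSucc hSm hFm))

end IsFiniteFiltration

end Measurability

theorem Graphing.cost_le_measure_univ {X : Type*} [MeasurableSpace X] {μ : Measure X}
    {R : X → X → Prop} (g : Graphing X μ R) (h : ∀ x, {y | g.E x y}.encard ≤ 2) :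
    g.cost ≤ μ univ :=
  calc g.cost ≤ 1 / 2 * ∫⁻ _, 2 ∂μ := by
        unfold Graphing.cost
        gcongr with x
        exact_mod_cast h x
    _ = μ univ := by
        rw [lintegral_const, ← mul_assoc, one_div,
          ENNReal.inv_mul_cancel two_ne_zero ENNReal.ofNat_ne_top, one_mul]

section EqCons

variable {X : Type*} {R : ℕ → X → X → Prop}

/-- Prepending equality as level `0` makes `LexLT` compare the points of an `R 0`-class by `F`. -/
def eqCons (R : ℕ → X → X → Prop) : ℕ → X → X → Prop
  | 0 => Eq
  | n + 1 => R n

theorem isFiniteFiltration_eqCons (hR : ∀ n, Equivalence (R n))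
    (hmono : ∀ n x y, R n x y → R (n + 1) x y) (hfin : ∀ n x, {y | R n x y}.Finite) : IsFiniteFiltration (eqCons R) where
  equivalence
    | 0 => eq_equivalence
    | n + 1 => hR n
  monotone := monotone_nat_of_le_succ fun
    | 0 => fun x _ (h : x = _) => h ▸ (hR 0).refl x
    | n + 1 => hmono n
  finite
    | 0, x => by simp [eqCons]
    | n + 1, x => hfin n x
  eq_of_rel_zero _ _ h := h

theorem exists_eqCons_iff (hR : ∀ x, R 0 x x) {x y : X} :
    (∃ n, eqCons R n x y) ↔ ∃ n, R n x y := by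
  refine ⟨?_, fun ⟨n, h⟩ => ⟨n + 1, h⟩⟩
  rintro ⟨_ | n, h⟩
  exacts [⟨0, (h : x = y) ▸ hR x⟩, ⟨n, h⟩]

theorem measurableSet_eqCons [MeasurableSpace X] [MeasurableEq X]
    (hR : ∀ n, MeasurableSet {q : X × X | R n q.1 q.2}) :
    ∀ n, MeasurableSet {q : X × X | eqCons R n q.1 q.2}
  | 0 => measurableSet_diagonal
  | n + 1 => hR n

end EqCons

theorem stmt8_general {X : Type*} [MeasurableSpace X] [StandardBorelSpace X]
    (μ : Measure X) [IsProbabilityMeasure μ]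
    (R : X → X → Prop)
    (Rn : ℕ → X → X → Prop) (hRn : ∀ n, Equivalence (Rn n))
    (hmeasn : ∀ n, MeasurableSet {q : X × X | Rn n q.1 q.2})
    (hmono : ∀ n x y, Rn n x y → Rn (n + 1) x y)
    (hfin : ∀ n x, {y | Rn n x y}.Finite)
    (hunion : ∀ x y, R x y ↔ ∃ n, Rn n x y) :
    relCost X μ R ≤ 1 := by
  obtain ⟨F, hF⟩ := exists_measurableEmbedding_real X
  have hS := isFiniteFiltration_eqCons hRn hmono hfin
  have hR_iff (x y : X) : R x y ↔ ∃ n, eqCons Rn n x y :=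
    (hunion x y).trans (exists_eqCons_iff fun x => (hRn 0).refl x).symm
  let g : Graphing X μ R :=
    { E := LexLine (eqCons Rn) F
      symm := fun _ _ => Or.symm
      sub := fun x y h => (hR_iff x y).2 (hS.exists_rel_of_lexLine h)
      spans := fun x y h => hS.reflTransGen_lexLine hF.injective ((hR_iff x y).1 h)
      meas := hS.measurableSet_lexLine (measurableSet_eqCons hmeasn) hF.measurable }
  calc relCost X μ R ≤ g.cost := iInf_le _ g
    _ ≤ μ univ := g.cost_le_measure_univ (hS.encard_lexLine_le_two hF.injective)
    _ = 1 := measure_univ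

/-- A hyperfinite equivalence relation (an increasing union of measurable subrelations with
all classes finite) has cost at most 1. -/
theorem stmt8 {X : Type*} [MeasurableSpace X] [StandardBorelSpace X]
    (μ : Measure X) [IsProbabilityMeasure μ]
    (R : X → X → Prop) (hR : Equivalence R)
    (hcount : ∀ x, {y | R x y}.Countable)
    (Rn : ℕ → X → X → Prop) (hRn : ∀ n, Equivalence (Rn n))
    (hmeasn : ∀ n, MeasurableSet {q : X × X | Rn n q.1 q.2})
    (hmono : ∀ n x y, Rn n x y → Rn (n + 1) x y)
    (hfin : ∀ n x, {y | Rn n x y}.Finite)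
    (hunion : ∀ x y, R x y ↔ ∃ n, Rn n x y) :
    relCost X μ R ≤ 1 :=
  stmt8_general μ R Rn hRn hmeasn hmono hfin hunion
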